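/- Let a, b be real numbers with max{a,b} = 1. Then there exists a constant C > 0 such that for all t ≥ 0, ∫₀ᵗ (1+t-s)^(-a) (1+s)^(-b) ds ≤ C (1+t)^(-min{a,b}) · log(2+t). -/
import Mathlib

open Real intervalIntegral

private lemma key_ineq (x y m : ℝ) (hx : 1 ≤ x) (hy : 1 ≤ y) (hm : m ≤ 1) :
    x ^ (-(1:ℝ)) * y ^ (-m) ≤ (x + y) ^ (-m) * (x⁻¹ + y⁻¹) := by
  have hx0 : (0:ℝ) < x := by linarith
  have hy0 : (0:ℝ) < y := by linarith
  have hxy : (0:ℝ) < x + y := by linarith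
  have hA : (0:ℝ) < (x + y) ^ m := Real.rpow_pos_of_pos hxy m
  have hB : (0:ℝ) < y ^ m := Real.rpow_pos_of_pos hy0 m
  have h1 : ((x+y)/y) ^ m ≤ (x+y)/y := by
    have hr : 1 ≤ (x+y)/y := (one_le_div hy0).mpr (by linarith)
    calc ((x+y)/y) ^ m ≤ ((x+y)/y) ^ (1:ℝ) :=
          Real.rpow_le_rpow_of_exponent_le hr hm
      _ = (x+y)/y := Real.rpow_one _
  have h2 : (x+y)^m / y^m ≤ (x+y)/y := by
    rw [← Real.div_rpow hxy.le hy0.le]; exact h1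
  rw [div_le_div_iff₀ hB hy0] at h2
  have key' : (1:ℝ)/(x * y^m) ≤ (x+y)/((x+y)^m * (x*y)) := by
    rw [div_le_div_iff₀ (by positivity) (by positivity)]
    nlinarith [mul_le_mul_of_nonneg_left h2 hx0.le]
  calc x ^ (-(1:ℝ)) * y ^ (-m) = 1/(x * y^m) := by
        rw [Real.rpow_neg_one, Real.rpow_neg hy0.le]; ring
    _ ≤ (x+y)/((x+y)^m * (x*y)) := key'
    _ = (x + y) ^ (-m) * (x⁻¹ + y⁻¹) := by
        rw [Real.rpow_neg hxy.le]
        field_simp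
        ring

theorem integral_ineq_max_eq_one (a b : ℝ) (hab : max a b = 1) :
    ∃ C > 0, ∀ t : ℝ, t ≥ 0 →
      (∫ s in (0:ℝ)..t, (1 + t - s) ^ (-a) * (1 + s) ^ (-b)) ≤
        C * (1 + t) ^ (-(min a b)) * Real.log (2 + t) := by
  set m := min a b with hmdef
  have hm1 : m ≤ 1 := min_le_max.trans hab.le
  refine ⟨2 * 2 ^ |m|, by positivity, ?_⟩
  intro t ht
  have h1t : (0:ℝ) < 1 + t := by linarith
  have h2t : (0:ℝ) < 2 + t := by linarith
  have huIcc : Set.uIcc (0:ℝ) t = Set.Icc 0 t := Set.uIcc_of_le ht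
  -- continuity / integrability
  have hcx : ∀ s ∈ Set.Icc (0:ℝ) t, (0:ℝ) < 1 + t - s := fun s hs => by
    have := hs.2; simp only [Set.mem_Icc] at hs; linarith [hs.2]
  have hcy : ∀ s ∈ Set.Icc (0:ℝ) t, (0:ℝ) < 1 + s := fun s hs => by
    simp only [Set.mem_Icc] at hs; linarith [hs.1]
  have hcontf : ContinuousOn (fun s => (1 + t - s) ^ (-a) * (1 + s) ^ (-b)) (Set.Icc 0 t) := by
    apply ContinuousOn.mul
    · exact ContinuousOn.rpow_const (by fun_prop) (fun s hs => Or.inl (hcx s hs).ne')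
    · exact ContinuousOn.rpow_const (by fun_prop) (fun s hs => Or.inl (hcy s hs).ne')
  have hcontg : ContinuousOn
      (fun s => (2 + t) ^ (-m) * ((1 + t - s)⁻¹ + (1 + s)⁻¹)) (Set.Icc 0 t) := by
    apply ContinuousOn.mul continuousOn_const
    exact ContinuousOn.add
      (ContinuousOn.inv₀ (by fun_prop) (fun s hs => (hcx s hs).ne'))
      (ContinuousOn.inv₀ (by fun_prop) (fun s hs => (hcy s hs).ne'))
  have hintf : IntervalIntegrable (fun s => (1 + t - s) ^ (-a) * (1 + s) ^ (-b))
      MeasureTheory.volume 0 t := by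
    apply ContinuousOn.intervalIntegrable
    rw [huIcc]; exact hcontf
  have hintg : IntervalIntegrable (fun s => (2 + t) ^ (-m) * ((1 + t - s)⁻¹ + (1 + s)⁻¹))
      MeasureTheory.volume 0 t := by
    apply ContinuousOn.intervalIntegrable
    rw [huIcc]; exact hcontg
  -- pointwise bound
  have hptw : ∀ s ∈ Set.Icc (0:ℝ) t,
      (1 + t - s) ^ (-a) * (1 + s) ^ (-b) ≤
        (2 + t) ^ (-m) * ((1 + t - s)⁻¹ + (1 + s)⁻¹) := by
    intro s hs
    simp only [Set.mem_Icc] at hs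
    have hx : (1:ℝ) ≤ 1 + t - s := by linarith [hs.2]
    have hy : (1:ℝ) ≤ 1 + s := by linarith [hs.1]
    have hsum : (1 + t - s) + (1 + s) = 2 + t := by ring
    rcases max_eq_iff.mp hab with ⟨ha, hb⟩ | ⟨hb, ha⟩
    · -- a = 1, b ≤ 1 = a, so m = b
      have hmb : m = b := by rw [hmdef, ha]; exact min_eq_right (ha ▸ hb)
      rw [ha, hmb, ← hsum]
      exact key_ineq _ _ b hx hy (ha ▸ hb)
    · -- b = 1, a ≤ 1, so m = a
      have hma : m = a := by rw [hmdef, hb]; exact min_eq_left (hb ▸ ha)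
      rw [hb, hma, ← hsum]
      have h := key_ineq (1 + s) (1 + t - s) a hy hx (hb ▸ ha)
      calc (1 + t - s) ^ (-a) * (1 + s) ^ (-(1:ℝ))
          = (1 + s) ^ (-(1:ℝ)) * (1 + t - s) ^ (-a) := by ring
        _ ≤ ((1 + s) + (1 + t - s)) ^ (-a) * ((1 + s)⁻¹ + (1 + t - s)⁻¹) := h
        _ = ((1 + t - s) + (1 + s)) ^ (-a) * ((1 + t - s)⁻¹ + (1 + s)⁻¹) := by
            rw [add_comm (1 + s)]; ring
  have hmono := intervalIntegral.integral_mono_on ht hintf hintg hptw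
  -- compute the integral of g
  have hI1 : (∫ s in (0:ℝ)..t, (1 + t - s)⁻¹) = Real.log (1 + t) := by
    have h := intervalIntegral.integral_comp_sub_left (a := 0) (b := t)
      (fun x : ℝ => x⁻¹) (1 + t)
    simp only [sub_zero] at h
    have hb : (1:ℝ) + t - t = 1 := by ring
    rw [hb] at h
    have hmem : (0:ℝ) ∉ Set.uIcc 1 (1+t) := by
      rw [Set.uIcc_of_le (by linarith : (1:ℝ) ≤ 1 + t)]
      intro hmem
      exact absurd hmem.1 (by norm_num)
    have heq : (fun s : ℝ => (1 + t - s)⁻¹) = (fun s : ℝ => ((1+t) - s)⁻¹) := rfl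
    rw [heq, h, integral_inv hmem, div_one]
  have hI2 : (∫ s in (0:ℝ)..t, (1 + s)⁻¹) = Real.log (1 + t) := by
    have h := intervalIntegral.integral_comp_add_left (a := 0) (b := t)
      (fun x : ℝ => x⁻¹) 1
    simp only [add_zero] at h
    have hmem : (0:ℝ) ∉ Set.uIcc 1 (1+t) := by
      rw [Set.uIcc_of_le (by linarith : (1:ℝ) ≤ 1 + t)]
      intro hmem
      exact absurd hmem.1 (by norm_num)
    rw [h, integral_inv hmem, div_one]
  have hintx : IntervalIntegrable (fun s : ℝ => (1 + t - s)⁻¹) MeasureTheory.volume 0 t := by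
    apply ContinuousOn.intervalIntegrable
    rw [huIcc]
    exact ContinuousOn.inv₀ (by fun_prop) (fun s hs => (hcx s hs).ne')
  have hinty : IntervalIntegrable (fun s : ℝ => (1 + s)⁻¹) MeasureTheory.volume 0 t := by
    apply ContinuousOn.intervalIntegrable
    rw [huIcc]
    exact ContinuousOn.inv₀ (by fun_prop) (fun s hs => (hcy s hs).ne')
  have hgval : (∫ s in (0:ℝ)..t, (2 + t) ^ (-m) * ((1 + t - s)⁻¹ + (1 + s)⁻¹))
      = (2 + t) ^ (-m) * (2 * Real.log (1 + t)) := by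
    rw [intervalIntegral.integral_const_mul, intervalIntegral.integral_add hintx hinty,
      hI1, hI2]
    ring
  -- final constant estimates
  have hpow : (2 + t) ^ (-m) ≤ 2 ^ |m| * (1 + t) ^ (-m) := by
    rcases le_or_gt 0 m with hm0 | hm0
    · have h1 : (2 + t) ^ (-m) ≤ (1 + t) ^ (-m) :=
        Real.rpow_le_rpow_of_nonpos h1t (by linarith) (by linarith)
      have h2 : (1:ℝ) ≤ 2 ^ |m| :=
        Real.one_le_rpow (by norm_num) (abs_nonneg m)
      nlinarith [Real.rpow_pos_of_pos h1t (-m)]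
    · have h1 : (2 + t) ^ (-m) ≤ (2 * (1 + t)) ^ (-m) :=
        Real.rpow_le_rpow h2t.le (by linarith) (by linarith)
      rw [Real.mul_rpow (by norm_num) h1t.le] at h1
      rw [abs_of_neg hm0]
      exact h1
  have hlog1 : (0:ℝ) ≤ Real.log (1 + t) := Real.log_nonneg (by linarith)
  have hlog2 : Real.log (1 + t) ≤ Real.log (2 + t) := Real.log_le_log h1t (by linarith)
  calc (∫ s in (0:ℝ)..t, (1 + t - s) ^ (-a) * (1 + s) ^ (-b))
      ≤ (2 + t) ^ (-m) * (2 * Real.log (1 + t)) := hgval ▸ hmono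
    _ ≤ (2 ^ |m| * (1 + t) ^ (-m)) * (2 * Real.log (2 + t)) := by
        apply mul_le_mul hpow (by linarith) (by linarith)
        positivity
    _ = 2 * 2 ^ |m| * (1 + t) ^ (-m) * Real.log (2 + t) := by ring
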